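/- arXiv:0706.2714 — 3 statements merged into one kernel-verified Lean document; each statement's English description precedes it below -/
import Mathlib

section
/- Let $J, K \subseteq S$ in $S_n$ with $x \in X_J^{-1} \cap X_K$. Let $\mathcal{J}_q$ and $\mathcal{K}_m$ denote the vertex sets of the connected components of the graphs of $J$ and $K$. If $i \in x^{-1}\mathcal{J}_q \cap \mathcal{K}_m$ and $j \in x^{-1}\mathcal{J}_{q'} \cap \mathcal{K}_m$ with $q < q'$ (where components are ordered by their least elements), then $i < j$. -/
open Equiv Pointwise

/-- The copy of `Sₙ` inside `Equiv.Perm ℕ`: permutations fixing every point `≥ n`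
(we use points `0,…,n-1` instead of `1,…,n`). -/
def symN (n : ℕ) : Subgroup (Equiv.Perm ℕ) where
  carrier := {x | ∀ i, n ≤ i → x i = i}
  one_mem' := fun _ _ => rfl
  mul_mem' := by
    intro a b ha hb i hi
    simp only [Set.mem_setOf_eq] at *
    simp [Equiv.Perm.mul_apply, hb i hi, ha i hi]
  inv_mem' := by
    intro a ha i hi
    simp only [Set.mem_setOf_eq] at *
    conv_lhs => rw [← ha i hi]
    simp

/-- The number of inversions (the Coxeter length in `Sₙ`). -/
def invNum (n : ℕ) (x : Equiv.Perm ℕ) : ℕ :=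
  ((Finset.range n ×ˢ Finset.range n).filter
    (fun p => p.1 < p.2 ∧ x p.2 < x p.1)).card

/-- The adjacent transpositions `(k, k+1)` for `k ∈ J`. -/
def gens (J : Set ℕ) : Set (Equiv.Perm ℕ) := (fun k => Equiv.swap k (k + 1)) '' J

/-- The parabolic subgroup `W_J`. -/
def parabolic (J : Set ℕ) : Subgroup (Equiv.Perm ℕ) := Subgroup.closure (gens J)

/-- `x ∈ X_J`: a minimal length left coset representative of `W_J` in `Sₙ`. -/
def isMinLeft (n : ℕ) (J : Set ℕ) (x : Equiv.Perm ℕ) : Prop :=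
  x ∈ symN n ∧ ∀ w ∈ parabolic J, invNum n x ≤ invNum n (x * w)

/-- `x ∈ X_J⁻¹`: a minimal length right coset representative of `W_J` in `Sₙ`. -/
def isMinRight (n : ℕ) (J : Set ℕ) (x : Equiv.Perm ℕ) : Prop :=
  x ∈ symN n ∧ ∀ w ∈ parabolic J, invNum n x ≤ invNum n (w * x)

/-- `i1` and `j1` lie in the same connected component of the graph `𝒥` with
edges `(k, k+1)` for `k ∈ J`. -/
def sameComp (J : Set ℕ) (i j : ℕ) : Prop :=
  ∀ t, min i j ≤ t → t < max i j → t ∈ J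

/-- The vertex set of the connected component of the graph of `J` containing `a`. -/
def comp (J : Set ℕ) (a : ℕ) : Set ℕ := {b | sameComp J a b}

/-- `c` is a composition of `n`. -/
def isComposition (n : ℕ) (c : List ℕ) : Prop := c.sum = n ∧ ∀ k ∈ c, 0 < k

/-- The `q`-th consecutive block determined by a composition `c`. -/
def blockSet (c : List ℕ) (q : ℕ) : Set ℕ := Set.Ico ((c.take q).sum) ((c.take (q + 1)).sum)

/-- The set of adjacent transpositions corresponding to a composition `c`:
those `(i, i+1)` with `i, i+1` in the same block. -/
def edgesOf (c : List ℕ) : Set ℕ := {i | ∃ q, i ∈ blockSet c q ∧ i + 1 ∈ blockSet c q}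

/-- `i` indexes an edge `(i, i+1)` of the image graph `x⁻¹𝒥`, i.e. `(x i, x (i+1))`
is an edge of `𝒥` (as an unordered pair). -/
def imgEdges (x : Equiv.Perm ℕ) (J : Set ℕ) : Set ℕ :=
  {i | ∃ t ∈ J, (x i = t ∧ x (i + 1) = t + 1) ∨ (x i = t + 1 ∧ x (i + 1) = t)}

/-!
Right multiplication by an adjacent transposition `(k, k+1)` at a descent of `x` (that is,
`x (k+1) < x k`) strictly lowers the number of inversions. Hence minimality of `x` in its left
coset `x W_K` forces `x k < x (k+1)` for every `k ∈ K`, so `x` is increasing on each connected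
component of the graph of `K`, and `x i < x j` for `i, j` in one component forces `i < j`.
-/

namespace Equiv.Perm

def inversions (n : ℕ) (x : Perm ℕ) : Finset (ℕ × ℕ) :=
  (Finset.range n ×ˢ Finset.range n).filter (fun p => p.1 < p.2 ∧ x p.2 < x p.1)

theorem invNum_eq_card_inversions (n : ℕ) (x : Perm ℕ) : invNum n x = (inversions n x).card :=
  rfl

theorem mem_inversions {n : ℕ} {x : Perm ℕ} {p : ℕ × ℕ} :
    p ∈ inversions n x ↔ p.1 < n ∧ p.2 < n ∧ p.1 < p.2 ∧ x p.2 < x p.1 := by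
  simp [inversions, and_assoc]

theorem swap_succ_apply_lt_apply {k a b : ℕ} (hab : a < b) (hne : ¬(a = k ∧ b = k + 1)) :
    swap k (k + 1) a < swap k (k + 1) b := by
  simp only [swap_apply_def]
  split_ifs <;> omega

theorem invNum_mul_swap_lt {n k : ℕ} (hk : k + 1 < n) {x : Perm ℕ} (hdesc : x (k + 1) < x k) :
    invNum n (x * swap k (k + 1)) < invNum n x := by
  set s := swap k (k + 1)
  have hs_lt : ∀ a < n, s a < n := fun a ha => by
    simp only [s, swap_apply_def]
    split_ifs <;> omega
  have hmaps : ∀ p ∈ inversions n (x * s), Prod.map s s p ∈ (inversions n x).erase (k, k + 1) := by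
    rintro ⟨a, b⟩ hp
    obtain ⟨ha, hb, hab, hinv⟩ := mem_inversions.1 hp
    simp only [Perm.mul_apply] at hinv
    have hne : ¬(a = k ∧ b = k + 1) := by
      rintro ⟨rfl, rfl⟩
      simp only [s, swap_apply_left, swap_apply_right] at hinv
      omega
    refine Finset.mem_erase.2 ⟨fun h => hne ?_, mem_inversions.2
      ⟨hs_lt a ha, hs_lt b hb, swap_succ_apply_lt_apply hab hne, hinv⟩⟩
    simp only [Prod.map_apply, Prod.mk.injEq, s, swap_apply_eq_iff, swap_apply_left,
      swap_apply_right] at h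
    omega
  rw [invNum_eq_card_inversions, invNum_eq_card_inversions]
  calc (inversions n (x * s)).card ≤ ((inversions n x).erase (k, k + 1)).card :=
        Finset.card_le_card_of_injOn _ hmaps (s.injective.prodMap s.injective).injOn
    _ < (inversions n x).card :=
        Finset.card_erase_lt_of_mem (mem_inversions.2 ⟨by omega, hk, by omega, hdesc⟩)

end Equiv.Perm

open Equiv.Perm

theorem isMinLeft.apply_lt_apply_succ {n : ℕ} {K : Set ℕ} {x : Perm ℕ} (hx : isMinLeft n K x)
    {k : ℕ} (hk : k ∈ K) (hkn : k + 1 < n) : x k < x (k + 1) := by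
  refine lt_of_not_ge fun hle => ?_
  have hdesc : x (k + 1) < x k := hle.lt_of_ne (x.injective.ne (by omega))
  exact (hx.2 _ (Subgroup.subset_closure ⟨k, hk, rfl⟩)).not_gt (invNum_mul_swap_lt hkn hdesc)

theorem isMinLeft.strictMonoOn_Icc {n : ℕ} {K : Set ℕ} (hK : ∀ k ∈ K, k + 1 < n) {x : Perm ℕ}
    (hx : isMinLeft n K x) {i j : ℕ} (hij : sameComp K i j) :
    StrictMonoOn x (Set.Icc (min i j) (max i j)) := by
  refine strictMonoOn_of_lt_succ Set.ordConnected_Icc fun a _ ha ha1 => ?_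
  rw [Order.succ_eq_add_one] at ha1 ⊢
  have haK : a ∈ K := hij a ha.1 (by simp only [Set.mem_Icc] at ha1; omega)
  exact hx.apply_lt_apply_succ haK (hK a haK)

theorem stmt4_general (n : ℕ) (J K : Set ℕ)
    (hK : ∀ k ∈ K, k + 1 < n)
    (x : Equiv.Perm ℕ) (hx : isMinRight n J x ∧ isMinLeft n K x)
    (i j : ℕ) (hm : sameComp K i j)
    (hlt : x i < x j) :
    i < j :=
  ((hx.2.strictMonoOn_Icc hK hm).lt_iff_lt ⟨min_le_left i j, le_max_left i j⟩
    ⟨min_le_right i j, le_max_right i j⟩).1 hlt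

/-- let `x ∈ X_J⁻¹ ∩ X_K`.  If `i ∈ x⁻¹𝒥_q ∩ 𝒦ₘ` and
`j ∈ x⁻¹𝒥_{q'} ∩ 𝒦ₘ` with `q < q'`, then `i < j`.  Here `x i ∈ 𝒥_q`,
`x j ∈ 𝒥_{q'}`, and since the components `𝒥_q` are intervals ordered by least
element, `q < q'` is encoded as: `x i`, `x j` lie in different components of the
graph of `J` and `x i < x j`.  Membership in the same `𝒦ₘ` is `sameComp K i j`. -/
theorem stmt4 (n : ℕ) (J K : Set ℕ)
    (hJ : ∀ k ∈ J, k + 1 < n) (hK : ∀ k ∈ K, k + 1 < n)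
    (x : Equiv.Perm ℕ) (hx : isMinRight n J x ∧ isMinLeft n K x)
    (i j : ℕ) (hm : sameComp K i j)
    (hq : ¬ sameComp J (x i) (x j)) (hlt : x i < x j) :
    i < j :=
  stmt4_general n J K hK x hx i j hm hlt
end

section
/- Let $J, K \subseteq S$ in $S_n$ and $x \in X_J^{-1} \cap X_K$. With $(\mathcal{J}_1,\dots,\mathcal{J}_r)$ and $(\mathcal{K}_1,\dots,\mathcal{K}_s)$ the ordered presentations of the graphs of $J$ and $K$, the ordered presentation of the graph $x^{-1}\mathcal{J} \cap \mathcal{K}$ is the list $(x^{-1}\mathcal{J}_1 \cap \mathcal{K}_1, x^{-1}\mathcal{J}_2 \cap \mathcal{K}_1, \dots, x^{-1}\mathcal{J}_r \cap \mathcal{K}_1, x^{-1}\mathcal{J}_1 \cap \mathcal{K}_2, \dots, x^{-1}\mathcal{J}_r \cap \mathcal{K}_s)$ with empty sets removed. That is, each nonempty $x^{-1}\mathcal{J}_q \cap \mathcal{K}_m$ is the vertex set of a connected component of $x^{-1}\mathcal{J} \cap \mathcal{K}$, and the sets, listed in this order, have strictly increasing elements from one set to the next. -/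
open Equiv Pointwise

/-!
If `x ∈ X_K` then `x` increases along every edge of `𝒦`, and if `x ∈ X_J⁻¹` then `x⁻¹`
increases along every edge of `𝒥`; otherwise multiplying by the corresponding simple
transposition would remove an inversion. Hence on a block `x⁻¹𝒥_q ∩ 𝒦_m` the map `x` is
increasing, so the block is an interval, and two consecutive points `i, i + 1` of it have
consecutive images: a value strictly between `x i` and `x (i + 1)` lies in `𝒥_q`, so its
preimage would lie strictly between `i` and `i + 1`. Thus the block is a component of
`x⁻¹𝒥 ∩ 𝒦`. Blocks in different components of `𝒦` are ordered as those components are,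
and within one component of `𝒦` the increasing map `x` orders blocks as the components of
`𝒥` containing their images.
-/

section SameComp

variable {S : Set ℕ} {u v : ℕ}

lemma sameComp_equivalence (S : Set ℕ) : Equivalence (sameComp S) where
  refl _ _ h₁ h₂ := by omega
  symm h t h₁ h₂ := h t (by omega) (by omega)
  trans {u v w} h₁ h₂ t ht₁ ht₂ := by
    by_cases ht : min u v ≤ t ∧ t < max u v
    · exact h₁ t ht.1 ht.2
    · exact h₂ t (by omega) (by omega)

lemma sameComp_add_one_iff : sameComp S u (u + 1) ↔ u ∈ S :=
  ⟨fun h => h u (by omega) (by omega), fun h t _ _ => (show t = u by omega) ▸ h⟩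

lemma sameComp_of_mem_comp {a : ℕ} (hu : u ∈ comp S a) (hv : v ∈ comp S a) : sameComp S u v :=
  (sameComp_equivalence S).trans ((sameComp_equivalence S).symm hu) hv

lemma ordConnected_comp (S : Set ℕ) (a : ℕ) : (comp S a).OrdConnected :=
  ⟨fun u hu v hv w ⟨huw, hwv⟩ t h₁ h₂ => by
    by_cases ht : min a u ≤ t ∧ t < max a u
    · exact hu t ht.1 ht.2
    · exact hv t (by omega) (by omega)⟩

lemma rel_of_sameComp {r : ℕ → ℕ → Prop} (hr : Equivalence r) (hS : ∀ t ∈ S, r t (t + 1))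
    (h : sameComp S u v) : r u v := by
  wlog huv : u ≤ v generalizing u v
  · exact hr.symm (this ((sameComp_equivalence S).symm h) (by omega))
  induction v, huv using Nat.le_induction with
  | base => exact hr.refl u
  | succ w huw ih =>
    exact hr.trans (ih fun t h₁ h₂ => h t (by omega) (by omega)) (hS w (h w (by omega) (by omega)))

lemma strictMonoOn_comp {f : ℕ → ℕ} (hf : ∀ k ∈ S, f k < f (k + 1)) (a : ℕ) :
    StrictMonoOn f (comp S a) :=
  strictMonoOn_of_lt_add_one (ordConnected_comp S a) fun k _ hk hk₁ =>
    hf k (sameComp_add_one_iff.mp (sameComp_of_mem_comp hk hk₁))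

lemma lt_of_sameComp_of_not_sameComp {b b' i j : ℕ} (hi : sameComp S b i) (hj : sameComp S b' j)
    (hbb' : ¬ sameComp S b b') (hlt : b < b') : i < j := by
  obtain ⟨t, ht₁, ht₂, ht⟩ : ∃ t, min b b' ≤ t ∧ t < max b b' ∧ t ∉ S := by
    simpa [sameComp] using hbb'
  have hit : i ≤ t := by
    by_contra! h
    exact ht (hi t (by omega) (by omega))
  have htj : t < j := by
    by_contra! h
    exact ht (hj t (by omega) (by omega))
  omega

end SameComp

section Inversions

variable {n k : ℕ} {x : Perm ℕ}

lemma apply_lt_of_mem_symN (hx : x ∈ symN n) {u : ℕ} (hu : u < n) : x u < n := by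
  by_contra! h
  have : x (x u) = x u := hx _ h
  exact absurd (x.injective this) (by omega)

lemma swap_mem_symN (hk : k + 1 < n) : swap k (k + 1) ∈ symN n :=
  fun _ hi => swap_apply_of_ne_of_ne (by omega) (by omega)

lemma invNum_inv (hx : x ∈ symN n) : invNum n x⁻¹ = invNum n x := by
  have hx' : x⁻¹ ∈ symN n := inv_mem hx
  unfold invNum
  refine Finset.card_nbij' (fun p => (x⁻¹ p.2, x⁻¹ p.1)) (fun p => (x p.2, x p.1))
    ?_ ?_ (fun p _ => by simp) (fun p _ => by simp)
  · intro p hp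
    simp only [Finset.coe_filter, Finset.mem_product, Finset.mem_range,
      Set.mem_ofPred, Perm.coe_inv, apply_symm_apply] at hp ⊢
    exact ⟨⟨apply_lt_of_mem_symN hx' hp.1.2, apply_lt_of_mem_symN hx' hp.1.1⟩, hp.2.2, hp.2.1⟩
  · intro p hp
    simp only [Finset.coe_filter, Finset.mem_product, Finset.mem_range,
      Set.mem_ofPred, Perm.coe_inv, symm_apply_apply] at hp ⊢
    exact ⟨⟨apply_lt_of_mem_symN hx hp.1.2, apply_lt_of_mem_symN hx hp.1.1⟩, hp.2.2, hp.2.1⟩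

/-- Conjugating by `swap k (k + 1)` maps the inversions of `x * swap k (k + 1)` injectively
into those of `x` other than `(k, k + 1)`. -/
lemma invNum_mul_swap_lt (hk : k + 1 < n) (h : x (k + 1) < x k) :
    invNum n (x * swap k (k + 1)) < invNum n x := by
  set s := swap k (k + 1) with hs
  have hs_def : ∀ u, s u = if u = k then k + 1 else if u = k + 1 then k else u :=
    fun u => swap_apply_def k (k + 1) u
  have hmem : (k, k + 1) ∈ (Finset.range n ×ˢ Finset.range n).filter
      (fun p => p.1 < p.2 ∧ x p.2 < x p.1) := by
    simp only [Finset.mem_filter, Finset.mem_product, Finset.mem_range]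
    exact ⟨⟨by omega, hk⟩, by omega, h⟩
  unfold invNum
  refine (Finset.card_le_card_of_injOn (fun p => (s p.1, s p.2)) (fun p hp => ?_) ?_).trans_lt
    (Finset.card_erase_lt_of_mem hmem)
  · simp only [Finset.mem_coe, Finset.mem_erase, Finset.mem_filter, Finset.mem_product,
      Finset.mem_range, ne_eq, Prod.ext_iff] at hp ⊢
    rw [Perm.mul_apply, Perm.mul_apply] at hp
    obtain ⟨⟨hu, hv⟩, huv, hinv⟩ := hp
    have hne : ¬(p.1 = k ∧ p.2 = k + 1) := by
      rintro ⟨e₁, e₂⟩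
      simp only [e₁, e₂, hs, swap_apply_left, swap_apply_right] at hinv
      omega
    rw [hs_def, hs_def] at hinv ⊢
    split_ifs at hinv ⊢ <;> omega
  · intro p _ q _ e
    exact Prod.ext (s.injective (congrArg Prod.fst e)) (s.injective (congrArg Prod.snd e))

lemma invNum_swap_mul_lt (hk : k + 1 < n) (hx : x ∈ symN n) (h : x⁻¹ (k + 1) < x⁻¹ k) :
    invNum n (swap k (k + 1) * x) < invNum n x :=
  calc invNum n (swap k (k + 1) * x) = invNum n (x⁻¹ * swap k (k + 1)) := by
        rw [← invNum_inv (mul_mem (swap_mem_symN hk) hx), mul_inv_rev, swap_inv]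
    _ < invNum n x⁻¹ := invNum_mul_swap_lt hk h
    _ = invNum n x := invNum_inv hx

variable {J K : Set ℕ}

lemma isMinLeft.apply_lt_apply_add_one (hx : isMinLeft n K x) (hk : k ∈ K) (hkn : k + 1 < n) :
    x k < x (k + 1) := by
  by_contra! h
  have hne : x (k + 1) ≠ x k := x.injective.ne (by omega)
  exact (hx.2 _ (Subgroup.subset_closure ⟨k, hk, rfl⟩)).not_gt
    (invNum_mul_swap_lt hkn (h.lt_of_ne hne))

lemma isMinRight.inv_apply_lt_inv_apply_add_one (hx : isMinRight n J x) (hk : k ∈ J)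
    (hkn : k + 1 < n) : x⁻¹ k < x⁻¹ (k + 1) := by
  by_contra! h
  have hne : x⁻¹ (k + 1) ≠ x⁻¹ k := x⁻¹.injective.ne (by omega)
  exact (hx.2 _ (Subgroup.subset_closure ⟨k, hk, rfl⟩)).not_gt
    (invNum_swap_mul_lt hkn hx.1 (h.lt_of_ne hne))

end Inversions

section Cell

variable {x : Perm ℕ} {J K : Set ℕ} {a b i : ℕ}

/-- The set `x⁻¹𝒥_q ∩ 𝒦_m`, where `𝒥_q ∋ a` and `𝒦_m ∋ b`. -/
def cell (x : Perm ℕ) (J K : Set ℕ) (a b : ℕ) : Set ℕ := ⇑x⁻¹ '' comp J a ∩ comp K b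

lemma mem_cell : i ∈ cell x J K a b ↔ sameComp J a (x i) ∧ sameComp K b i := by
  simp only [cell, comp, Set.mem_inter_iff, Perm.coe_inv, Set.mem_image_equiv, symm_symm,
    Set.mem_ofPred_eq]

lemma sameComp_of_mem_imgEdges (hi : i ∈ imgEdges x J) : sameComp J (x i) (x (i + 1)) := by
  obtain ⟨t, ht, ⟨h₁, h₂⟩ | ⟨h₁, h₂⟩⟩ := hi
  · rw [h₁, h₂]
    exact sameComp_add_one_iff.mpr ht
  · rw [h₁, h₂]
    exact (sameComp_equivalence J).symm (sameComp_add_one_iff.mpr ht)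

lemma ordConnected_cell (hxK : ∀ k ∈ K, x k < x (k + 1)) (a b : ℕ) :
    (cell x J K a b).OrdConnected := by
  refine ⟨fun u hu v hv w hw => ?_⟩
  rw [mem_cell] at hu hv ⊢
  have hwK : sameComp K b w := (ordConnected_comp K b).out hu.2 hv.2 hw
  have hmono := (strictMonoOn_comp hxK b).monotoneOn
  exact ⟨(ordConnected_comp J a).out hu.1 hv.1
    ⟨hmono hu.2 hwK hw.1, hmono hwK hv.2 hw.2⟩, hwK⟩

lemma apply_add_one_of_mem_cell (hxK : ∀ k ∈ K, x k < x (k + 1))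
    (hxJ : ∀ j ∈ J, x⁻¹ j < x⁻¹ (j + 1)) (hi : i ∈ cell x J K a b)
    (hi₁ : i + 1 ∈ cell x J K a b) : x (i + 1) = x i + 1 := by
  rw [mem_cell] at hi hi₁
  have hlt := hxK i (sameComp_add_one_iff.mp (sameComp_of_mem_comp hi.2 hi₁.2))
  by_contra hne
  have hmem : x i + 1 ∈ comp J a := (ordConnected_comp J a).out hi.1 hi₁.1 ⟨by omega, by omega⟩
  have h₁ := strictMonoOn_comp hxJ a hi.1 hmem (lt_add_one _)
  have h₂ := strictMonoOn_comp hxJ a hmem hi₁.1 (by omega)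
  simp only [Perm.coe_inv, symm_apply_apply] at h₁ h₂
  omega

lemma mem_imgEdges_inter_of_mem_cell (hxK : ∀ k ∈ K, x k < x (k + 1))
    (hxJ : ∀ j ∈ J, x⁻¹ j < x⁻¹ (j + 1)) (hi : i ∈ cell x J K a b)
    (hi₁ : i + 1 ∈ cell x J K a b) : i ∈ imgEdges x J ∩ K := by
  have hsucc := apply_add_one_of_mem_cell hxK hxJ hi hi₁
  rw [mem_cell] at hi hi₁
  have hxiJ : sameComp J (x i) (x i + 1) := hsucc ▸ sameComp_of_mem_comp hi.1 hi₁.1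
  exact ⟨⟨x i, sameComp_add_one_iff.mp hxiJ, Or.inl ⟨rfl, hsucc⟩⟩,
    sameComp_add_one_iff.mp (sameComp_of_mem_comp hi.2 hi₁.2)⟩

lemma cell_eq_comp (hxK : ∀ k ∈ K, x k < x (k + 1)) (hxJ : ∀ j ∈ J, x⁻¹ j < x⁻¹ (j + 1))
    {c : ℕ} (hc : c ∈ cell x J K a b) : cell x J K a b = comp (imgEdges x J ∩ K) c := by
  have eJ := sameComp_equivalence J
  have eK := sameComp_equivalence K
  ext d
  constructor
  · intro hd t ht₁ ht₂
    have hsub := (ordConnected_cell hxK a b).uIcc_subset hc hd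
    exact mem_imgEdges_inter_of_mem_cell hxK hxJ (hsub (Set.mem_uIcc.mpr (by omega)))
      (hsub (Set.mem_uIcc.mpr (by omega)))
  · intro hd
    have hr : Equivalence fun u v => sameComp J (x u) (x v) ∧ sameComp K u v :=
      ⟨fun _ => ⟨eJ.refl _, eK.refl _⟩, fun h => ⟨eJ.symm h.1, eK.symm h.2⟩,
        fun h h' => ⟨eJ.trans h.1 h'.1, eK.trans h.2 h'.2⟩⟩
    obtain ⟨hcdJ, hcdK⟩ := rel_of_sameComp hr
      (fun t ht => ⟨sameComp_of_mem_imgEdges ht.1, sameComp_add_one_iff.mpr ht.2⟩) hd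
    rw [mem_cell] at hc ⊢
    exact ⟨eJ.trans hc.1 hcdJ, eK.trans hc.2 hcdK⟩

lemma lt_of_mem_cell_of_mem_cell (hxK : ∀ k ∈ K, x k < x (k + 1)) {a' b' j : ℕ}
    (hi : i ∈ cell x J K a b) (hj : j ∈ cell x J K a' b')
    (h : (¬ sameComp K b b' ∧ b < b') ∨ (sameComp K b b' ∧ ¬ sameComp J a a' ∧ a < a')) :
    i < j := by
  rw [mem_cell] at hi hj
  rcases h with ⟨hbb', hlt⟩ | ⟨hbb', haa', hlt⟩
  · exact lt_of_sameComp_of_not_sameComp hi.2 hj.2 hbb' hlt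
  · have hjK : sameComp K b j := (sameComp_equivalence K).trans hbb' hj.2
    exact ((strictMonoOn_comp hxK b).lt_iff_lt hi.2 hjK).mp
      (lt_of_sameComp_of_not_sameComp hi.1 hj.1 haa' hlt)

end Cell

/-- the Lemma: let `x ∈ X_J⁻¹ ∩ X_K`.  Then the ordered
presentation of `x⁻¹𝒥 ∩ 𝒦` consists of the nonempty sets `x⁻¹𝒥_q ∩ 𝒦ₘ`,
listed with `m` major and `q` minor: each nonempty `x⁻¹𝒥_q ∩ 𝒦ₘ` is the vertex
set of a connected component of `x⁻¹𝒥 ∩ 𝒦`, and all elements of a set earlier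
in the list are smaller than all elements of a later set.  Earlier means
`m < m'`, or `m = m'` and `q < q'`; since components are intervals ordered by
least element, this is encoded by comparing arbitrary representatives. -/
theorem stmt7 (n : ℕ) (J K : Set ℕ)
    (hJ : ∀ k ∈ J, k + 1 < n) (hK : ∀ k ∈ K, k + 1 < n)
    (x : Equiv.Perm ℕ) (hx : isMinRight n J x ∧ isMinLeft n K x) :
    (∀ a b c : ℕ, c ∈ (⇑x⁻¹ '' comp J a) ∩ comp K b →
        (⇑x⁻¹ '' comp J a) ∩ comp K b = comp (imgEdges x J ∩ K) c) ∧
    (∀ a b a' b' i j : ℕ,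
        i ∈ (⇑x⁻¹ '' comp J a) ∩ comp K b →
        j ∈ (⇑x⁻¹ '' comp J a') ∩ comp K b' →
        ((¬ sameComp K b b' ∧ b < b') ∨
          (sameComp K b b' ∧ ¬ sameComp J a a' ∧ a < a')) →
        i < j) := by
  obtain ⟨hright, hleft⟩ := hx
  have hxK : ∀ k ∈ K, x k < x (k + 1) := fun k hk =>
    hleft.apply_lt_apply_add_one hk (hK k hk)
  have hxJ : ∀ j ∈ J, x⁻¹ j < x⁻¹ (j + 1) := fun j hj =>
    hright.inv_apply_lt_inv_apply_add_one hj (hJ j hj)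
  exact ⟨fun a b c hc => cell_eq_comp hxK hxJ hc,
    fun a b a' b' i j hi hj h => lt_of_mem_cell_of_mem_cell hxK hi hj h⟩
end

section
/- The $\mathbb{Z}$-span of the elements $B_\nu = \sum_{\sigma \in X_\nu} \sigma$, as $\nu$ ranges over all compositions of $n$, is closed under multiplication in the group algebra $\mathbb{Z}[S_n]$; i.e., it forms a subring (the descent algebra of $S_n$). -/
open Equiv Pointwise

/-- The basis element `B_ν = ∑_{σ ∈ X_ν} σ` of the descent algebra, in the group
algebra `ℤ[Sₙ]` (realized inside the monoid algebra of `Equiv.Perm ℕ`). -/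
noncomputable def B (n : ℕ) (ν : List ℕ) : MonoidAlgebra ℤ (Equiv.Perm ℕ) :=
  ∑ᶠ σ ∈ {x | isMinLeft n (edgesOf ν) x}, MonoidAlgebra.single σ (1 : ℤ)

/-!
Minimal left coset representatives of `W_ν` are the permutations increasing on every block of
`ν`, i.e. the permutations whose descent set lies in the set `S` of inner block boundaries
(shifted by one). Hence `B_ν = ∑_{T ⊆ S} D_T`, where `D_T` is the sum of the permutations with
descent set `T`, and inverting over subsets puts every `D_T` in the span.

The coefficient of `σ` in `B_ν B_μ` counts the `x ∈ X_ν` with `x⁻¹ σ ∈ X_μ`. Such an `x` is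
determined by its coset `x W_ν`, i.e. by the block labels of `x⁻¹`, and `x⁻¹ σ` increases at `p`
iff the labels of `σ p`, `σ (p+1)` increase, or agree and `σ` increases at `p`. So the
coefficient only depends on the descent set of `σ`, and `B_ν B_μ` is a combination of the `D_T`.
-/

namespace DescentAlgebra

open Finset

section Blocks

variable {c : List ℕ} {i j k q q' : ℕ}

def partialSum (c : List ℕ) (q : ℕ) : ℕ := (c.take q).sum

lemma mem_blockSet_iff : i ∈ blockSet c q ↔ partialSum c q ≤ i ∧ i < partialSum c (q + 1) :=
  Iff.rfl

lemma partialSum_mono (c : List ℕ) : Monotone (partialSum c) :=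
  monotone_nat_of_le_succ fun q => by simp [partialSum, List.take_add_one]

lemma partialSum_le_sum (c : List ℕ) (q : ℕ) : partialSum c q ≤ c.sum := by
  conv_rhs => rw [← List.take_append_drop q c, List.sum_append]
  exact Nat.le_add_right _ _

lemma lt_sum_of_mem_blockSet (h : i ∈ blockSet c q) : i < c.sum :=
  h.2.trans_le (partialSum_le_sum c _)

lemma exists_mem_blockSet (hi : i < c.sum) : ∃ q, i ∈ blockSet c q := by
  have hex : ∃ q, i < partialSum c (q + 1) :=
    ⟨c.length, by simpa [partialSum, List.take_of_length_le] using hi⟩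
  refine ⟨Nat.find hex, ?_, Nat.find_spec hex⟩
  rcases h : Nat.find hex with _ | q
  · exact Nat.zero_le i
  · exact not_lt.mp (Nat.find_min hex (h ▸ q.lt_succ_self))

lemma lt_of_mem_blockSet_of_lt (hqq' : q < q') (hi : i ∈ blockSet c q)
    (hj : j ∈ blockSet c q') : i < j :=
  calc i < partialSum c (q + 1) := hi.2
    _ ≤ partialSum c q' := partialSum_mono c hqq'
    _ ≤ j := hj.1

lemma eq_of_mem_blockSet (hq : i ∈ blockSet c q) (hq' : i ∈ blockSet c q') : q = q' := by
  rcases lt_trichotomy q q' with h | h | h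
  · exact absurd (lt_of_mem_blockSet_of_lt h hq hq') (lt_irrefl i)
  · exact h
  · exact absurd (lt_of_mem_blockSet_of_lt h hq' hq) (lt_irrefl i)

open scoped Classical in
/-- Junk value `0` when `c.sum ≤ i`. -/
noncomputable def blockIdx (c : List ℕ) (i : ℕ) : ℕ :=
  if h : ∃ q, i ∈ blockSet c q then h.choose else 0

lemma mem_blockSet_blockIdx (hi : i < c.sum) : i ∈ blockSet c (blockIdx c i) := by
  have h := exists_mem_blockSet hi
  rw [blockIdx, dif_pos h]
  exact h.choose_spec

lemma blockIdx_eq_of_mem (h : i ∈ blockSet c q) : blockIdx c i = q :=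
  eq_of_mem_blockSet (mem_blockSet_blockIdx (lt_sum_of_mem_blockSet h)) h

lemma lt_of_blockIdx_lt (hi : i < c.sum) (hj : j < c.sum) (h : blockIdx c i < blockIdx c j) :
    i < j :=
  lt_of_mem_blockSet_of_lt h (mem_blockSet_blockIdx hi) (mem_blockSet_blockIdx hj)

lemma blockIdx_mono (hij : i ≤ j) (hj : j < c.sum) : blockIdx c i ≤ blockIdx c j :=
  not_lt.mp fun h => (lt_of_blockIdx_lt hj (hij.trans_lt hj) h).not_ge hij

lemma mem_edgesOf_iff : k ∈ edgesOf c ↔ k + 1 < c.sum ∧ ∀ q, partialSum c q ≠ k + 1 := by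
  constructor
  · rintro ⟨q, hk, hk1⟩
    rw [mem_blockSet_iff] at hk hk1
    refine ⟨hk1.2.trans_le (partialSum_le_sum c _), fun q' hq' => ?_⟩
    rcases le_or_gt q' q with h | h
    · have := partialSum_mono c h
      have := hk.1
      omega
    · have := partialSum_mono c (show q + 1 ≤ q' from h)
      have := hk1.2
      omega
  · rintro ⟨hk1, hne⟩
    obtain ⟨q, hq⟩ := exists_mem_blockSet hk1
    exact ⟨q, ⟨Nat.le_of_lt_succ (lt_of_le_of_ne hq.1 (hne q)), by have := hq.2; omega⟩, hq⟩

end Blocks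

section SymmetricGroup

variable {n : ℕ} {u v : Perm ℕ}

lemma apply_lt_of_mem_symN (hu : u ∈ symN n) {i : ℕ} (hi : i < n) : u i < n := by
  by_contra! h
  have := (symN n).inv_mem hu (u i) h
  simp only [Perm.coe_inv, symm_apply_apply] at this
  omega

lemma symN_finite (n : ℕ) : (symN n : Set (Perm ℕ)).Finite := by
  let restrict : symN n → (Fin n → Fin n) := fun u i => ⟨u.1 i, apply_lt_of_mem_symN u.2 i.2⟩
  have : Function.Injective restrict := by
    intro u v h
    ext i
    by_cases hi : i < n
    · simpa [restrict] using congr_arg Fin.val (congr_fun h ⟨i, hi⟩)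
    · rw [u.2 i (not_lt.mp hi), v.2 i (not_lt.mp hi)]
  exact Set.finite_coe_iff.mp (Finite.of_injective restrict this)

noncomputable def symNFinset (n : ℕ) : Finset (Perm ℕ) := (symN_finite n).toFinset

lemma mem_symNFinset : u ∈ symNFinset n ↔ u ∈ symN n :=
  Set.Finite.mem_toFinset _

lemma apply_eq_card_filter_lt (hu : u ∈ symN n) {a : ℕ} (ha : a < n) :
    u a = #{b ∈ range n | u b < u a} := by
  conv_lhs => rw [← card_range (u a)]
  refine card_nbij' ⇑u⁻¹ u (fun b hb => ?_) (fun b hb => ?_) (fun b _ => by simp)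
    (fun b _ => by simp)
  · have hb : b < u a := by simpa using hb
    have := apply_lt_of_mem_symN ((symN n).inv_mem hu) (hb.trans (apply_lt_of_mem_symN hu ha))
    simpa [hb] using this
  · simp only [coe_filter, mem_range, Set.mem_ofPred_eq] at hb
    simpa using hb.2

lemma eq_of_forall_lt_iff (hu : u ∈ symN n) (hv : v ∈ symN n)
    (h : ∀ a < n, ∀ b < n, u a < u b ↔ v a < v b) : u = v := by
  ext i
  by_cases hi : i < n
  · rw [apply_eq_card_filter_lt hu hi, apply_eq_card_filter_lt hv hi]
    congr 1
    exact filter_congr fun b hb => h b (mem_range.mp hb) i hi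
  · rw [hu i (not_lt.mp hi), hv i (not_lt.mp hi)]

end SymmetricGroup

section BlockIncreasing

variable {n : ℕ} {c : List ℕ} {x y : Perm ℕ}

def IsBlockIncreasing (c : List ℕ) (x : Perm ℕ) : Prop :=
  ∀ k ∈ edgesOf c, x k < x (k + 1)

lemma IsBlockIncreasing.apply_lt_apply (hx : IsBlockIncreasing c x) {q i j : ℕ}
    (hi : i ∈ blockSet c q) (hj : j ∈ blockSet c q) (hij : i < j) : x i < x j := by
  induction j, hij using Nat.le_induction with
  | base => exact hx i ⟨q, hi, hj⟩
  | succ j hij ih =>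
    have hjq : j ∈ blockSet c q := ⟨hi.1.trans (Nat.le_of_succ_le hij), by have := hj.2; omega⟩
    exact (ih hjq).trans (hx j ⟨q, hjq, hj⟩)

lemma IsBlockIncreasing.lt_iff_toLex_lt (hx : IsBlockIncreasing c x) {i j : ℕ}
    (hi : i < c.sum) (hj : j < c.sum) :
    i < j ↔ toLex (blockIdx c i, x i) < toLex (blockIdx c j, x j) := by
  rw [Prod.Lex.toLex_lt_toLex]
  rcases lt_trichotomy (blockIdx c i) (blockIdx c j) with h | h | h
  · simp [h, lt_of_blockIdx_lt hi hj h]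
  · have hi' := mem_blockSet_blockIdx hi
    have hj' : j ∈ blockSet c (blockIdx c i) := h ▸ mem_blockSet_blockIdx hj
    simp only [h, lt_irrefl, true_and, false_or]
    refine ⟨hx.apply_lt_apply hi' hj', fun hlt => ?_⟩
    rcases lt_trichotomy i j with hij | rfl | hji
    · exact hij
    · exact absurd hlt (lt_irrefl _)
    · exact absurd (hx.apply_lt_apply hj' hi' hji) (lt_asymm hlt)
  · simp [h.ne', not_lt_of_gt h, (lt_of_blockIdx_lt hj hi h).not_gt]

lemma IsBlockIncreasing.inv_lt_inv_iff (hc : c.sum = n) (hx : IsBlockIncreasing c x)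
    (hxn : x ∈ symN n) {a b : ℕ} (ha : a < n) (hb : b < n) :
    x⁻¹ a < x⁻¹ b ↔ toLex (blockIdx c (x⁻¹ a), a) < toLex (blockIdx c (x⁻¹ b), b) := by
  have hinv := (symN n).inv_mem hxn
  have := hx.lt_iff_toLex_lt (hc ▸ apply_lt_of_mem_symN hinv ha)
    (hc ▸ apply_lt_of_mem_symN hinv hb)
  simp only [Perm.coe_inv, Equiv.apply_symm_apply] at this ⊢
  exact this

lemma IsBlockIncreasing.eq_of_blockIdx_inv_eq (hc : c.sum = n) (hx : IsBlockIncreasing c x)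
    (hy : IsBlockIncreasing c y) (hxn : x ∈ symN n) (hyn : y ∈ symN n)
    (h : ∀ a < n, blockIdx c (x⁻¹ a) = blockIdx c (y⁻¹ a)) : x = y :=
  inv_injective <| eq_of_forall_lt_iff ((symN n).inv_mem hxn) ((symN n).inv_mem hyn)
    fun a ha b hb => by
      rw [hx.inv_lt_inv_iff hc hxn ha hb, hy.inv_lt_inv_iff hc hyn ha hb, h a ha, h b hb]

end BlockIncreasing

section MinimalRepresentatives

variable {n : ℕ} {c : List ℕ} {x : Perm ℕ}

lemma swap_apply_lt {k j : ℕ} (hk : k + 1 < n) (hj : j < n) : swap k (k + 1) j < n := by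
  rw [swap_apply_def]
  split_ifs <;> omega

/-- Right multiplication by the transposition `(k, k+1)` permutes the inversions of `x`
and removes the inversion `(k, k+1)`. -/
lemma invNum_mul_swap_lt {k : ℕ} (hk : k + 1 < n) (hx : x (k + 1) < x k) :
    invNum n (x * swap k (k + 1)) < invNum n x := by
  set s := swap k (k + 1)
  set inv := (range n ×ˢ range n).filter fun p => p.1 < p.2 ∧ x p.2 < x p.1
  have hmem : (k, k + 1) ∈ inv := by simp [inv, hx, hk, Nat.lt_of_succ_lt hk]
  refine lt_of_le_of_lt ?_ (card_erase_lt_of_mem hmem)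
  rw [invNum]
  refine card_le_card_of_injOn (fun p => (s p.1, s p.2)) (fun p hp => ?_)
    (fun p _ p' _ h => Prod.ext (s.injective (congr_arg Prod.fst h))
      (s.injective (congr_arg Prod.snd h)))
  rw [Finset.mem_coe, mem_filter, mem_product, mem_range, mem_range] at hp
  simp only [Perm.mul_apply] at hp
  obtain ⟨⟨hp1, hp2⟩, hlt, hinv⟩ := hp
  have hne : ¬(p.1 = k ∧ p.2 = k + 1) := by
    rintro ⟨h1, h2⟩
    simp only [h1, h2, s, swap_apply_left, swap_apply_right] at hinv
    omega
  have hslt : s p.1 < s p.2 := by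
    simp only [s, swap_apply_def]
    split_ifs <;> omega
  simp only [coe_erase, Set.mem_sdiff, coe_filter, mem_product, mem_range, Set.mem_ofPred_eq,
    Set.mem_singleton_iff]
  refine ⟨⟨⟨swap_apply_lt hk hp1, swap_apply_lt hk hp2⟩, hslt, hinv⟩, fun h => ?_⟩
  have h1 : s p.1 = k := congr_arg Prod.fst h
  have h2 : s p.2 = k + 1 := congr_arg Prod.snd h
  rw [swap_apply_eq_iff, swap_apply_left] at h1
  rw [swap_apply_eq_iff, swap_apply_right] at h2
  omega

def fiberPreserving {α β : Type*} (f : α → β) : Subgroup (Perm α) where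
  carrier := {w | ∀ a, f (w a) = f a}
  one_mem' _ := rfl
  mul_mem' ha hb a := (ha _).trans (hb a)
  inv_mem' {w} hw a := by simpa using (hw (w⁻¹ a)).symm

lemma parabolic_le_fiberPreserving (c : List ℕ) :
    parabolic (edgesOf c) ≤ fiberPreserving (blockIdx c) := by
  refine (Subgroup.closure_le _).mpr ?_
  rintro _ ⟨k, ⟨q, hk, hk1⟩, rfl⟩ a
  have : blockIdx c k = blockIdx c (k + 1) := by
    rw [blockIdx_eq_of_mem hk, blockIdx_eq_of_mem hk1]
  rw [swap_apply_def]
  split_ifs with h h'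
  · rw [h, this]
  · rw [h', this]
  · rfl

lemma parabolic_le_symN (hc : c.sum = n) : parabolic (edgesOf c) ≤ symN n := by
  refine (Subgroup.closure_le _).mpr ?_
  rintro _ ⟨k, hk, rfl⟩ i hi
  have := hc ▸ (mem_edgesOf_iff.mp hk).1
  exact swap_apply_of_ne_of_ne (by omega) (by omega)

/-- The inversions of a block-increasing `x` all join different blocks, and a block-preserving
`w` carries them to inversions of `x * w`. -/
lemma IsBlockIncreasing.invNum_le_mul (hc : c.sum = n) (hx : IsBlockIncreasing c x)
    {w : Perm ℕ} (hw : w ∈ parabolic (edgesOf c)) : invNum n x ≤ invNum n (x * w) := by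
  have hwinv := (parabolic (edgesOf c)).inv_mem hw
  have hsym := parabolic_le_symN hc hwinv
  have hfib := parabolic_le_fiberPreserving c hwinv
  refine card_le_card_of_injOn (fun p => (w⁻¹ p.1, w⁻¹ p.2)) (fun p hp => ?_)
    (fun p _ p' _ h => Prod.ext (w⁻¹.injective (congr_arg Prod.fst h))
      (w⁻¹.injective (congr_arg Prod.snd h)))
  simp only [coe_filter, mem_product, mem_range, Set.mem_ofPred_eq] at hp ⊢
  obtain ⟨⟨hp1, hp2⟩, hlt, hinv⟩ := hp
  have hblock : blockIdx c p.1 < blockIdx c p.2 := by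
    refine lt_of_le_of_ne (blockIdx_mono hlt.le (hc ▸ hp2)) fun h => ?_
    have := (hx.lt_iff_toLex_lt (hc ▸ hp1) (hc ▸ hp2)).mp hlt
    simp only [h, Prod.Lex.toLex_lt_toLex, lt_self_iff_false, true_and, false_or] at this
    omega
  refine ⟨⟨apply_lt_of_mem_symN hsym hp1, apply_lt_of_mem_symN hsym hp2⟩, ?_, by simpa using hinv⟩
  refine lt_of_blockIdx_lt (hc ▸ apply_lt_of_mem_symN hsym hp1)
    (hc ▸ apply_lt_of_mem_symN hsym hp2) ?_
  rwa [hfib, hfib]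

lemma isMinLeft_iff (hc : c.sum = n) :
    isMinLeft n (edgesOf c) x ↔ x ∈ symN n ∧ IsBlockIncreasing c x := by
  refine ⟨fun ⟨hxn, hmin⟩ => ⟨hxn, fun k hk => ?_⟩,
    fun ⟨hxn, hx⟩ => ⟨hxn, fun w hw => hx.invNum_le_mul hc hw⟩⟩
  have hk1n : k + 1 < n := hc ▸ (mem_edgesOf_iff.mp hk).1
  refine lt_of_le_of_ne (not_lt.mp fun hlt => ?_) fun h => by simpa using x.injective h
  exact (invNum_mul_swap_lt hk1n hlt).not_ge (hmin _ (Subgroup.subset_closure ⟨k, hk, rfl⟩))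

lemma exists_isMinLeft_mul {J : Set ℕ} (hJ : parabolic J ≤ symN n) {g : Perm ℕ}
    (hg : g ∈ symN n) : ∃ w ∈ parabolic J, isMinLeft n J (g * w) := by
  obtain ⟨w, hw, hmin⟩ := exists_minimalFor_of_wellFoundedLT
    (· ∈ parabolic J) (fun w => invNum n (g * w)) ⟨1, (parabolic J).one_mem⟩
  refine ⟨w, hw, (symN n).mul_mem hg (hJ hw), fun w' hw' => ?_⟩
  rw [mul_assoc]
  exact not_lt.mp fun h => (hmin ((parabolic J).mul_mem hw hw') h.le).not_gt h

/-- Take for `x` an element of minimal length in `z⁻¹ W_c`; the elements of `W_c` preserve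
blocks. -/
lemma exists_isMinLeft_blockIdx_inv (hc : c.sum = n) {z : Perm ℕ} (hz : z ∈ symN n) :
    ∃ x, isMinLeft n (edgesOf c) x ∧ ∀ a, blockIdx c (x⁻¹ a) = blockIdx c (z a) := by
  obtain ⟨w, hw, hx⟩ := exists_isMinLeft_mul (parabolic_le_symN hc) ((symN n).inv_mem hz)
  refine ⟨z⁻¹ * w, hx, fun a => ?_⟩
  simpa using parabolic_le_fiberPreserving c ((parabolic (edgesOf c)).inv_mem hw) (z a)

end MinimalRepresentatives

section Coefficients

variable {n : ℕ} {ν μ : List ℕ}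

lemma setOf_isMinLeft_finite (n : ℕ) (J : Set ℕ) : {x | isMinLeft n J x}.Finite :=
  (symN_finite n).subset fun _ hx => hx.1

noncomputable def minLeftFinset (n : ℕ) (J : Set ℕ) : Finset (Perm ℕ) :=
  (setOf_isMinLeft_finite n J).toFinset

lemma mem_minLeftFinset {J : Set ℕ} {x : Perm ℕ} : x ∈ minLeftFinset n J ↔ isMinLeft n J x :=
  Set.Finite.mem_toFinset _

lemma B_eq_sum (n : ℕ) (ν : List ℕ) :
    B n ν = ∑ x ∈ minLeftFinset n (edgesOf ν), MonoidAlgebra.single x (1 : ℤ) :=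
  finsum_mem_eq_finite_toFinset_sum _ _

open scoped Classical in
/-- The factorizations `σ = x * y` with `x ∈ X_ν` and `y ∈ X_μ`, recorded by their left factor. -/
noncomputable def leftFactors (n : ℕ) (ν μ : List ℕ) (σ : Perm ℕ) : Finset (Perm ℕ) :=
  {x ∈ minLeftFinset n (edgesOf ν) | isMinLeft n (edgesOf μ) (x⁻¹ * σ)}

lemma mem_leftFactors {σ x : Perm ℕ} : x ∈ leftFactors n ν μ σ ↔
    isMinLeft n (edgesOf ν) x ∧ isMinLeft n (edgesOf μ) (x⁻¹ * σ) := by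
  classical
  rw [leftFactors, mem_filter, mem_minLeftFinset]

/-- Send `x` to the `x' ∈ X_ν` with `x'⁻¹ τ ∈ W_ν x⁻¹ σ`. Whether `x⁻¹ σ` increases at `p`
only depends on the blocks of `x⁻¹ σ p`, `x⁻¹ σ (p+1)` and on whether `σ` increases at `p`, so
`x'⁻¹ τ` increases where `x⁻¹ σ` does. -/
lemma card_leftFactors_le (hν : ν.sum = n) (hμ : μ.sum = n) {σ τ : Perm ℕ}
    (hσ : σ ∈ symN n) (hτ : τ ∈ symN n) (hστ : ∀ p, σ p < σ (p + 1) ↔ τ p < τ (p + 1)) :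
    #(leftFactors n ν μ σ) ≤ #(leftFactors n ν μ τ) := by
  choose! rep hrep hrepIdx using
    fun z (hz : z ∈ symN n) => exists_isMinLeft_blockIdx_inv hν hz
  have hz : ∀ x ∈ leftFactors n ν μ σ, x⁻¹ * σ * τ⁻¹ ∈ symN n := fun x hx =>
    (symN n).mul_mem (mem_leftFactors.mp hx).2.1 ((symN n).inv_mem hτ)
  have hidx : ∀ x ∈ leftFactors n ν μ σ, ∀ a,
      blockIdx ν ((rep (x⁻¹ * σ * τ⁻¹))⁻¹ (τ a)) = blockIdx ν (x⁻¹ (σ a)) := by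
    intro x hx a
    rw [hrepIdx _ (hz x hx)]
    simp
  refine card_le_card_of_injOn (fun x => rep (x⁻¹ * σ * τ⁻¹)) (fun x hx => ?_)
    (fun x₁ hx₁ x₂ hx₂ h => ?_)
  · have hx' := hrep _ (hz x hx)
    obtain ⟨hxν, hxμ⟩ := mem_leftFactors.mp hx
    refine mem_leftFactors.mpr ⟨hx', ?_⟩
    rw [isMinLeft_iff hν] at hxν hx'
    rw [isMinLeft_iff hμ] at hxμ ⊢
    refine ⟨(symN n).mul_mem ((symN n).inv_mem hx'.1) hτ, fun p hp => ?_⟩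
    have hp1 : p + 1 < n := hμ ▸ (mem_edgesOf_iff.mp hp).1
    have hlt := hxμ.2 p hp
    simp only [Perm.mul_apply] at hlt ⊢
    rw [hxν.2.inv_lt_inv_iff hν hxν.1 (apply_lt_of_mem_symN hσ (by omega))
      (apply_lt_of_mem_symN hσ hp1)] at hlt
    rw [hx'.2.inv_lt_inv_iff hν hx'.1 (apply_lt_of_mem_symN hτ (by omega))
      (apply_lt_of_mem_symN hτ hp1), hidx x hx, hidx x hx]
    simpa [Prod.Lex.toLex_lt_toLex, hστ] using hlt
  · obtain ⟨hx₁, -⟩ := mem_leftFactors.mp hx₁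
    obtain ⟨hx₂, -⟩ := mem_leftFactors.mp hx₂
    rw [isMinLeft_iff hν] at hx₁ hx₂
    refine hx₁.2.eq_of_blockIdx_inv_eq hν hx₂.2 hx₁.1 hx₂.1 fun b _ => ?_
    have h₁ := hidx x₁ ‹_› (σ⁻¹ b)
    have h₂ := hidx x₂ ‹_› (σ⁻¹ b)
    rw [show σ (σ⁻¹ b) = b from σ.apply_symm_apply b] at h₁ h₂
    rw [← h₁, ← h₂]
    exact congr_arg (fun x : Perm ℕ => blockIdx ν (x⁻¹ (τ (σ⁻¹ b)))) h

lemma card_leftFactors_eq (hν : ν.sum = n) (hμ : μ.sum = n) {σ τ : Perm ℕ}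
    (hσ : σ ∈ symN n) (hτ : τ ∈ symN n) (hστ : ∀ p, σ p < σ (p + 1) ↔ τ p < τ (p + 1)) :
    #(leftFactors n ν μ σ) = #(leftFactors n ν μ τ) :=
  (card_leftFactors_le hν hμ hσ hτ hστ).antisymm
    (card_leftFactors_le hν hμ hτ hσ fun p => (hστ p).symm)

lemma B_mul_B (n : ℕ) (ν μ : List ℕ) :
    B n ν * B n μ =
      ∑ σ ∈ symNFinset n, #(leftFactors n ν μ σ) • MonoidAlgebra.single σ (1 : ℤ) := by
  classical
  calc B n ν * B n μ
      = ∑ x ∈ minLeftFinset n (edgesOf ν), ∑ y ∈ minLeftFinset n (edgesOf μ),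
          MonoidAlgebra.single (x * y) (1 : ℤ) := by
        simp [B_eq_sum, sum_mul_sum, MonoidAlgebra.single_mul_single]
    _ = ∑ x ∈ minLeftFinset n (edgesOf ν),
          ∑ σ ∈ symNFinset n with isMinLeft n (edgesOf μ) (x⁻¹ * σ),
            MonoidAlgebra.single σ (1 : ℤ) := by
        refine sum_congr rfl fun x hx => sum_nbij' (x * ·) (x⁻¹ * ·) ?_ ?_ ?_ ?_ ?_ <;>
          intro y hy <;> simp_all [mem_minLeftFinset, mem_symNFinset]
        exact (symN n).mul_mem hx.1 hy.1
    _ = ∑ σ ∈ symNFinset n, ∑ x ∈ leftFactors n ν μ σ, MonoidAlgebra.single σ (1 : ℤ) := by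
        refine sum_comm' fun x σ => ?_
        simp only [mem_filter, mem_leftFactors, mem_minLeftFinset, mem_symNFinset]
        exact ⟨fun ⟨hx, hσ, hy⟩ => ⟨⟨hx, hy⟩, hσ⟩, fun ⟨⟨hx, hy⟩, hσ⟩ => ⟨hx, hσ, hy⟩⟩
    _ = _ := by simp

end Coefficients

section Descents

variable {n : ℕ} {σ τ : Perm ℕ}

def descents (n : ℕ) (σ : Perm ℕ) : Finset ℕ := {k ∈ range n | σ (k + 1) < σ k}

lemma add_one_lt_of_mem_descents (hσ : σ ∈ symN n) {k : ℕ} (hk : k ∈ descents n σ) :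
    k + 1 < n := by
  obtain ⟨hkn, hdesc⟩ := mem_filter.mp hk
  by_contra! h
  rw [hσ (k + 1) h] at hdesc
  have := apply_lt_of_mem_symN hσ (mem_range.mp hkn)
  omega

lemma lt_apply_add_one_iff_of_descents_eq (hσ : σ ∈ symN n) (hτ : τ ∈ symN n)
    (h : descents n σ = descents n τ) (p : ℕ) : σ p < σ (p + 1) ↔ τ p < τ (p + 1) := by
  by_cases hp : p < n
  · have hmem : σ (p + 1) < σ p ↔ τ (p + 1) < τ p := by
      simpa [descents, hp] using congr_arg (p ∈ ·) h
    have hσp : σ p ≠ σ (p + 1) := fun e => by simpa using σ.injective e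
    have hτp : τ p ≠ τ (p + 1) := fun e => by simpa using τ.injective e
    omega
  · rw [hσ p (by omega), hσ (p + 1) (by omega), hτ p (by omega), hτ (p + 1) (by omega)]

lemma isBlockIncreasing_iff_descents_subset (hσ : σ ∈ symN n) {c : List ℕ} {S : Finset ℕ}
    (hc : ∀ k, k ∈ edgesOf c ↔ k + 1 < n ∧ k ∉ S) :
    IsBlockIncreasing c σ ↔ descents n σ ⊆ S := by
  refine ⟨fun hinc k hk => ?_, fun hsub k hk => ?_⟩
  · by_contra hkS
    have := hinc k ((hc k).mpr ⟨add_one_lt_of_mem_descents hσ hk, hkS⟩)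
    have := (mem_filter.mp hk).2
    omega
  · obtain ⟨hk1, hkS⟩ := (hc k).mp hk
    have hne : σ k ≠ σ (k + 1) := fun e => by simpa using σ.injective e
    have : ¬σ (k + 1) < σ k := fun h => hkS (hsub (mem_filter.mpr ⟨mem_range.mpr (by omega), h⟩))
    omega

/-- The composition whose set of block boundaries inside `{1, …, n-1}` is `S + 1`. -/
lemma exists_composition_edgesOf_eq (S : Finset ℕ) :
    ∃ ν, isComposition n ν ∧ ∀ k, k ∈ edgesOf ν ↔ k + 1 < n ∧ k ∉ S := by
  classical
  let c : CompositionAsSet n :=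
    ⟨{j | (j : ℕ) = 0 ∨ (j : ℕ) = n ∨ (j : ℕ) - 1 ∈ S}, by simp, by simp⟩
  refine ⟨c.blocks, ⟨c.blocks_sum, fun k hk => c.toComposition.blocks_pos hk⟩, fun k => ?_⟩
  rw [mem_edgesOf_iff, c.blocks_sum]
  refine and_congr_right fun hk => ?_
  have hbound : (⟨k + 1, by omega⟩ : Fin (n + 1)) ∈ c.boundaries ↔ k ∈ S := by
    simp [c, hk.ne]
  rw [← not_iff_not, not_not, ← hbound, c.mem_boundaries_iff_exists_blocks_sum_take_eq]
  push Not
  refine ⟨fun ⟨q, hq⟩ => ⟨q, ?_, hq⟩, fun ⟨i, _, hi⟩ => ⟨i, hi⟩⟩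
  by_contra! hcard
  have hlen : c.blocks.length ≤ q := by
    rw [c.blocks_length]
    have := c.card_boundaries_eq_succ_length
    omega
  rw [partialSum, List.take_of_length_le hlen, c.blocks_sum] at hq
  omega

end Descents

section Span

variable {n : ℕ}

noncomputable def descentAlgebra (n : ℕ) : Submodule ℤ (MonoidAlgebra ℤ (Perm ℕ)) :=
  Submodule.span ℤ {p | ∃ ν : List ℕ, isComposition n ν ∧ p = B n ν}

open scoped Classical in
noncomputable def descentClassSum (n : ℕ) (S : Finset ℕ) : MonoidAlgebra ℤ (Perm ℕ) :=
  ∑ σ ∈ symNFinset n with descents n σ = S, MonoidAlgebra.single σ 1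

lemma B_eq_sum_descentClassSum {ν : List ℕ} {S : Finset ℕ} (hν : ν.sum = n)
    (hS : ∀ k, k ∈ edgesOf ν ↔ k + 1 < n ∧ k ∉ S) :
    B n ν = ∑ T ∈ S.powerset, descentClassSum n T := by
  classical
  have hX : minLeftFinset n (edgesOf ν) = {σ ∈ symNFinset n | descents n σ ⊆ S} := by
    ext σ
    rw [mem_minLeftFinset, isMinLeft_iff hν, mem_filter, mem_symNFinset]
    exact and_congr_right (isBlockIncreasing_iff_descents_subset · hS)
  rw [B_eq_sum, hX, ← sum_fiberwise_of_maps_to (g := descents n) (t := S.powerset)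
    fun σ hσ => mem_powerset.mpr (mem_filter.mp hσ).2]
  refine sum_congr rfl fun T hT => ?_
  rw [descentClassSum, filter_filter]
  refine sum_congr (filter_congr fun σ _ => ?_) fun _ _ => rfl
  exact ⟨And.right, fun h => ⟨h ▸ mem_powerset.mp hT, h⟩⟩

/-- Solve `B_ν = ∑_{T ⊆ S} descentClassSum n T` for its term `T = S`. -/
lemma descentClassSum_mem_descentAlgebra (S : Finset ℕ) :
    descentClassSum n S ∈ descentAlgebra n := by
  classical
  induction S using Finset.strongInduction with
  | H S ih =>
    obtain ⟨ν, hν, hS⟩ := exists_composition_edgesOf_eq (n := n) S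
    have hB := B_eq_sum_descentClassSum hν.1 hS
    rw [← add_sum_erase _ _ (mem_powerset_self S)] at hB
    rw [eq_sub_of_add_eq hB.symm]
    refine sub_mem (Submodule.subset_span ⟨ν, hν, rfl⟩) (sum_mem fun T hT => ?_)
    exact ih T (mem_ssubsets.mp hT)

lemma sum_nsmul_single_mem_descentAlgebra (f : Perm ℕ → ℕ)
    (hf : ∀ σ ∈ symN n, ∀ τ ∈ symN n, descents n σ = descents n τ → f σ = f τ) :
    ∑ σ ∈ symNFinset n, f σ • MonoidAlgebra.single σ (1 : ℤ) ∈ descentAlgebra n := by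
  classical
  rw [← sum_fiberwise_of_maps_to (g := descents n) (t := (symNFinset n).image (descents n))
    fun σ hσ => mem_image_of_mem _ hσ]
  refine sum_mem fun S hS => ?_
  obtain ⟨σ₀, hσ₀, rfl⟩ := mem_image.mp hS
  have hconst : ∀ σ ∈ {σ ∈ symNFinset n | descents n σ = descents n σ₀},
      f σ • MonoidAlgebra.single σ (1 : ℤ) = f σ₀ • MonoidAlgebra.single σ 1 := by
    intro σ hσ
    obtain ⟨hσ, hdesc⟩ := mem_filter.mp hσ
    rw [hf σ (mem_symNFinset.mp hσ) σ₀ (mem_symNFinset.mp hσ₀) hdesc]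
  rw [sum_congr rfl hconst, ← smul_sum]
  exact Submodule.smul_of_tower_mem _ _ (descentClassSum_mem_descentAlgebra _)

lemma B_mul_B_mem {ν μ : List ℕ} (hν : ν.sum = n) (hμ : μ.sum = n) :
    B n ν * B n μ ∈ descentAlgebra n := by
  rw [B_mul_B]
  exact sum_nsmul_single_mem_descentAlgebra _ fun σ hσ τ hτ h =>
    card_leftFactors_eq hν hμ hσ hτ (lt_apply_add_one_iff_of_descents_eq hσ hτ h)

end Span

end DescentAlgebra

/-- the ℤ-span of the elements `B_ν`, for `ν` a composition of
`n`, is closed under multiplication in `ℤ[Sₙ]`: it is the descent algebra. -/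
theorem stmt12 (n : ℕ) (a b : MonoidAlgebra ℤ (Equiv.Perm ℕ))
    (ha : a ∈ Submodule.span ℤ {p | ∃ ν : List ℕ, isComposition n ν ∧ p = B n ν})
    (hb : b ∈ Submodule.span ℤ {p | ∃ ν : List ℕ, isComposition n ν ∧ p = B n ν}) :
    a * b ∈ Submodule.span ℤ {p | ∃ ν : List ℕ, isComposition n ν ∧ p = B n ν} := by
  have hab := Submodule.mul_mem_mul ha hb
  rw [Submodule.span_mul_span] at hab
  refine Submodule.span_le.mpr ?_ hab
  rintro _ ⟨_, ⟨ν, hν, rfl⟩, _, ⟨μ, hμ, rfl⟩, rfl⟩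
  exact DescentAlgebra.B_mul_B_mem hν.1 hμ.1
end
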